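/- Central differential privacy of LDP-SGD with a common budget: in the setting of the sequentially composed mechanism M_n built from update kernels K_1, …, K_n, if every iteration uses the same privacy parameters, i.e., for every fixed θ ∈ ℝ^d and every i the kernel x ↦ K_i((θ, x)) satisfies (ε, δ)-LDP, then M_n is (ε, δ)-differentially private with respect to adjacent datasets: for any (x_1,…,x_n) and (x_1′,…,x_n′) in 𝒳^n differing in exactly one coordinate and any measurable E ⊆ ℝ^d, M_n(x_1,…,x_n)(E) ≤ e^ε · M_n(x_1′,…,x_n′)(E) + δ. -/

import Mathlib

open MeasureTheory ProbabilityTheory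
open scoped ENNReal

/-- A mechanism `M` (a map from inputs to output measures) satisfies
`(ε, δ)`-local differential privacy if for every pair of individual inputs
`x, x'` and every measurable event `E`,
`M x E ≤ e^ε * M x' E + δ`. -/
def IsLDP {𝒳 ℛ : Type*} [MeasurableSpace 𝒳] [MeasurableSpace ℛ]
    (M : 𝒳 → Measure ℛ) (ε δ : ℝ) : Prop :=
  ∀ x x' : 𝒳, ∀ E : Set ℛ, MeasurableSet E →
    M x E ≤ ENNReal.ofReal (Real.exp ε) * M x' E + ENNReal.ofReal δ

/-- The sequentially composed mechanism obtained from update kernels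
`K i : Θ × 𝒳 → Θ` (each step `i + 1` updates the current iterate `θ` using the
datum `x i`, modelling one noisy SGD step), started at `θ₀`.  `seqLaw K θ₀ x n`
is the law of the `n`-th iterate `θ_n` on input data `x`, the randomness of
distinct steps being independent. -/
noncomputable def seqLaw {Θ 𝒳 : Type*} [MeasurableSpace Θ] [MeasurableSpace 𝒳]
    (K : ℕ → Kernel (Θ × 𝒳) Θ) (θ₀ : Θ) (x : ℕ → 𝒳) : ℕ → Measure Θ
  | 0 => Measure.dirac θ₀
  | (i + 1) => (seqLaw K θ₀ x i).bind (fun θ => K i (θ, x i))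

/-!
Up to the step `j` where the datasets differ the two chains have the same law; step `j`
mixes the `(ε, δ)`-LDP inequality of the `j`-th kernel over that common law; every later
step applies the same Markov kernel to both laws, and such post-processing preserves an
inequality `μ E ≤ a * ν E + δ` between measures.
-/

section Closeness

variable {Θ Θ' : Type*} [MeasurableSpace Θ] [MeasurableSpace Θ'] {a δ : ℝ≥0∞}

-- Layer cake: `∫⁻ f = ∫₀¹ μ {t < f} dt`, and the inequality holds on every level set.
theorem lintegral_le_mul_lintegral_add_of_forall_measure_le {μ ν : Measure Θ}
    (h : ∀ E, MeasurableSet E → μ E ≤ a * ν E + δ)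
    {f : Θ → ℝ≥0∞} (hf : Measurable f) (hf_le : ∀ θ, f θ ≤ 1) :
    ∫⁻ θ, f θ ∂μ ≤ a * ∫⁻ θ, f θ ∂ν + δ := by
  set g : Θ → ℝ := fun θ => (f θ).toReal
  have hg : Measurable g := hf.ennreal_toReal
  have hfg : f = fun θ => ENNReal.ofReal (g θ) := funext fun θ =>
    (ENNReal.ofReal_toReal ((hf_le θ).trans_lt ENNReal.one_lt_top).ne).symm
  have hg_le : ∀ θ, g θ ≤ 1 := fun θ =>
    ENNReal.toReal_le_of_le_ofReal zero_le_one (by simpa using hf_le θ)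
  have layer_cake : ∀ ρ : Measure Θ,
      ∫⁻ θ, f θ ∂ρ = ∫⁻ t in Set.Ioi 0, ρ {θ | t < g θ} := fun ρ => by
    rw [hfg]
    exact lintegral_eq_lintegral_meas_lt ρ
      (.of_forall fun θ => ENNReal.toReal_nonneg) hg.aemeasurable
  have level_le : ∀ t : ℝ, μ {θ | t < g θ} ≤
      a * ν {θ | t < g θ} + (Set.Iic 1).indicator (fun _ => δ) t := by
    intro t
    by_cases ht : t ≤ 1
    · simpa [ht] using h _ (measurableSet_lt measurable_const hg)
    · have : {θ | t < g θ} = ∅ :=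
        Set.eq_empty_of_forall_notMem fun θ hθ => ht ((le_of_lt hθ).trans (hg_le θ))
      simp [this]
  have hν_meas : Measurable fun t : ℝ => ν {θ | t < g θ} :=
    Antitone.measurable fun s t hst => measure_mono fun θ (hθ : t < g θ) => hst.trans_lt hθ
  calc ∫⁻ θ, f θ ∂μ
      ≤ ∫⁻ t in Set.Ioi 0, (a * ν {θ | t < g θ} + (Set.Iic 1).indicator (fun _ => δ) t) := by
        rw [layer_cake]; exact lintegral_mono level_le
    _ = a * ∫⁻ θ, f θ ∂ν + δ := by
        rw [lintegral_add_left (hν_meas.const_mul a), lintegral_const_mul a hν_meas,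
          lintegral_indicator_const measurableSet_Iic, Measure.restrict_apply measurableSet_Iic,
          Set.Iic_inter_Ioi, Real.volume_Ioc, layer_cake]
        simp

theorem bind_apply_le_of_forall_measure_le {μ ν : Measure Θ} (κ : Kernel Θ Θ')
    [IsZeroOrMarkovKernel κ] (h : ∀ E, MeasurableSet E → μ E ≤ a * ν E + δ)
    {E : Set Θ'} (hE : MeasurableSet E) :
    μ.bind κ E ≤ a * ν.bind κ E + δ := by
  rw [Measure.bind_apply hE κ.aemeasurable, Measure.bind_apply hE κ.aemeasurable]
  exact lintegral_le_mul_lintegral_add_of_forall_measure_le h (κ.measurable_coe hE)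
    fun θ => prob_le_one

theorem bind_apply_le_of_forall_apply_le (μ : Measure Θ) [IsZeroOrProbabilityMeasure μ]
    {κ η : Kernel Θ Θ'} (h : ∀ θ E, MeasurableSet E → κ θ E ≤ a * η θ E + δ)
    {E : Set Θ'} (hE : MeasurableSet E) :
    μ.bind κ E ≤ a * μ.bind η E + δ := by
  rw [Measure.bind_apply hE κ.aemeasurable, Measure.bind_apply hE η.aemeasurable]
  calc ∫⁻ θ, κ θ E ∂μ ≤ ∫⁻ θ, (a * η θ E + δ) ∂μ := lintegral_mono fun θ => h θ E hE
    _ = a * ∫⁻ θ, η θ E ∂μ + δ * μ Set.univ := by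
        rw [lintegral_add_right _ measurable_const, lintegral_const,
          lintegral_const_mul a (η.measurable_coe hE)]
    _ ≤ a * ∫⁻ θ, η θ E ∂μ + δ := by gcongr; exact mul_le_of_le_one_right' prob_le_one

end Closeness

section SeqLaw

variable {Θ 𝒳 : Type*} [MeasurableSpace Θ] [MeasurableSpace 𝒳]
  {K : ℕ → Kernel (Θ × 𝒳) Θ} {θ₀ : Θ} {x x' : ℕ → 𝒳}

theorem seqLaw_succ (i : ℕ) :
    seqLaw K θ₀ x (i + 1) = (seqLaw K θ₀ x i).bind ((K i).sectL (x i)) :=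
  rfl

instance [∀ i, IsMarkovKernel (K i)] (n : ℕ) : IsProbabilityMeasure (seqLaw K θ₀ x n) := by
  induction n with
  | zero => exact Measure.dirac.isProbabilityMeasure
  | succ i ih => rw [seqLaw_succ]; infer_instance

theorem seqLaw_congr {m : ℕ} (hx : ∀ i < m, x i = x' i) :
    seqLaw K θ₀ x m = seqLaw K θ₀ x' m := by
  induction m with
  | zero => rfl
  | succ i ih =>
    rw [seqLaw_succ, seqLaw_succ, ih fun k hk => hx k (hk.trans i.lt_succ_self),
      hx i i.lt_succ_self]

theorem seqLaw_apply_le_of_apply_le_of_forall_eq [∀ i, IsMarkovKernel (K i)] {a δ : ℝ≥0∞} {m k : ℕ}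
    (hmk : m ≤ k) (hx : ∀ i, m ≤ i → i < k → x i = x' i)
    (hm : ∀ E, MeasurableSet E → seqLaw K θ₀ x m E ≤ a * seqLaw K θ₀ x' m E + δ)
    {E : Set Θ} (hE : MeasurableSet E) :
    seqLaw K θ₀ x k E ≤ a * seqLaw K θ₀ x' k E + δ := by
  induction k, hmk using Nat.le_induction generalizing E with
  | base => exact hm E hE
  | succ k hmk ih =>
    rw [seqLaw_succ, seqLaw_succ, ← hx k hmk k.lt_succ_self]
    exact bind_apply_le_of_forall_measure_le _
      (fun E hE => ih (fun i hi hik => hx i hi (hik.trans k.lt_succ_self)) hE) hE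

end SeqLaw

theorem ldp_sgd_central_dp_general {d n : ℕ} {𝒳 : Type*} [MeasurableSpace 𝒳]
    (K : ℕ → Kernel ((Fin d → ℝ) × 𝒳) (Fin d → ℝ)) [∀ i, IsMarkovKernel (K i)]
    (ε δ : ℝ)
    (hLDP : ∀ i, i < n → ∀ θ : Fin d → ℝ, IsLDP (fun x => K i (θ, x)) ε δ)
    (θ₀ : Fin d → ℝ) (x x' : ℕ → 𝒳) (j : ℕ) (hj : j < n)
    (hsame : ∀ i, i < n → i ≠ j → x i = x' i)
    (E : Set (Fin d → ℝ)) (hE : MeasurableSet E) :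
    seqLaw K θ₀ x n E ≤
      ENNReal.ofReal (Real.exp ε) * seqLaw K θ₀ x' n E + ENNReal.ofReal δ := by
  have prefix_eq : seqLaw K θ₀ x j = seqLaw K θ₀ x' j :=
    seqLaw_congr fun i hi => hsame i (hi.trans hj) hi.ne
  have step_j : ∀ E, MeasurableSet E → seqLaw K θ₀ x (j + 1) E ≤
      ENNReal.ofReal (Real.exp ε) * seqLaw K θ₀ x' (j + 1) E + ENNReal.ofReal δ := by
    intro E hE
    rw [seqLaw_succ, seqLaw_succ, prefix_eq]
    exact bind_apply_le_of_forall_apply_le _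
      (fun θ E hE => hLDP j hj θ (x j) (x' j) E hE) hE
  exact seqLaw_apply_le_of_apply_le_of_forall_eq hj
    (fun i hi hin => hsame i hin (Nat.succ_le_iff.mp hi).ne') step_j hE

/-- **Central differential privacy of LDP-SGD with a common budget.**
If every iteration of the sequentially composed mechanism uses the same privacy
parameters, i.e. for every fixed `θ` and every step `i` the kernel
`x ↦ K i (θ, x)` satisfies `(ε, δ)`-LDP, then the law `M_n` of the `n`-th
iterate is `(ε, δ)`-differentially private with respect to adjacent datasets:
for any two datasets differing in exactly one coordinate and any measurable
`E ⊆ ℝ^d`, `M_n(x)(E) ≤ e^ε · M_n(x')(E) + δ`. -/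
theorem ldp_sgd_central_dp {d n : ℕ} {𝒳 : Type*} [MeasurableSpace 𝒳]
    (K : ℕ → Kernel ((Fin d → ℝ) × 𝒳) (Fin d → ℝ)) [∀ i, IsMarkovKernel (K i)]
    (ε δ : ℝ)
    (hLDP : ∀ i, i < n → ∀ θ : Fin d → ℝ, IsLDP (fun x => K i (θ, x)) ε δ)
    (θ₀ : Fin d → ℝ) (x x' : ℕ → 𝒳) (j : ℕ) (hj : j < n)
    (hdiff : x j ≠ x' j) (hsame : ∀ i, i < n → i ≠ j → x i = x' i)
    (E : Set (Fin d → ℝ)) (hE : MeasurableSet E) :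
    seqLaw K θ₀ x n E ≤
      ENNReal.ofReal (Real.exp ε) * seqLaw K θ₀ x' n E + ENNReal.ofReal δ :=
  ldp_sgd_central_dp_general K ε δ hLDP θ₀ x x' j hj hsame E hE
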